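/- For every integer n ≥ 1, the formal power series P_n = Σ_{ν=0}^{∞} q^{νn} (1−q^n)(1−q^{n+1})⋯(1−q^{n+ν}) in ℤ[[q]] satisfies the recurrence P_n = 1 − q^{2n+1} − q^{3n+2} P_{n+1}. -/

import Mathlib

/-- The sum `∑_{ν=0}^∞ f ν` of a family of power series in `ℤ[[q]]` whose `ν`-th member
has `q`-adic order at least `ν`: its coefficient at `q^d` is the (finite) sum of the
coefficients at `q^d` of `f 0, …, f d`. -/
noncomputable def seriesSum (f : ℕ → PowerSeries ℤ) : PowerSeries ℤ :=
  PowerSeries.mk fun d => PowerSeries.coeff (R := ℤ) d (∑ ν ∈ Finset.range (d + 1), f ν)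

/-- Euler's tower: `P_n = ∑_{ν=0}^∞ q^{νn} (1-q^n)(1-q^{n+1})⋯(1-q^{n+ν}) ∈ ℤ[[q]]`. -/
noncomputable def eulerP (n : ℕ) : PowerSeries ℤ :=
  seriesSum fun ν =>
    PowerSeries.X ^ (ν * n) * ∏ i ∈ Finset.range (ν + 1), (1 - PowerSeries.X ^ (n + i))

/-! With `T_k = q^{kn} (1-q^{n+1})⋯(1-q^{n+k})`, the `(ν+1)`-st term of `P_n` plus `q^{3n+2}`
times the `ν`-th term of `P_{n+1}` telescopes to `T_{ν+1} - T_{ν+2}`. Summing, the partial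
sums of `P_n + q^{3n+2} P_{n+1}` equal `1 - q^{2n+1} - T_{N+1}`, and `T_{N+1}` has `q`-adic
order at least `N` because `n ≥ 1`. -/

open Finset PowerSeries

theorem PowerSeries.eq_of_forall_X_pow_dvd_sub {R : Type*} [CommRing R]
    {φ ψ : R⟦X⟧} (h : ∀ N, X ^ N ∣ φ - ψ) : φ = ψ := by
  ext d
  have hd := X_pow_dvd_iff.1 (h (d + 1)) d d.lt_succ_self
  rwa [map_sub, sub_eq_zero] at hd

theorem X_pow_dvd_seriesSum_sub {f : ℕ → ℤ⟦X⟧} (hf : ∀ ν, X ^ ν ∣ f ν) (N : ℕ) :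
    X ^ N ∣ seriesSum f - ∑ ν ∈ range N, f ν := by
  rw [X_pow_dvd_iff]
  intro m hm
  have htail : ∀ ν ∈ range N, ν ∉ range (m + 1) → coeff m (f ν) = 0 := fun ν _ hν =>
    X_pow_dvd_iff.1 (hf ν) m (by simpa using hν)
  rw [map_sub, seriesSum, coeff_mk, map_sum, map_sum,
    sum_subset (range_subset_range.2 hm) htail, sub_self]

noncomputable def eulerTerm (n ν : ℕ) : ℤ⟦X⟧ :=
  X ^ (ν * n) * ∏ i ∈ range (ν + 1), (1 - X ^ (n + i))

noncomputable def eulerTail (n k : ℕ) : ℤ⟦X⟧ :=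
  X ^ (k * n) * ∏ i ∈ range k, (1 - X ^ (n + 1 + i))

theorem eulerP_eq_seriesSum_eulerTerm (n : ℕ) : eulerP n = seriesSum (eulerTerm n) := rfl

theorem X_pow_dvd_eulerTerm {n : ℕ} (hn : 1 ≤ n) (ν : ℕ) : X ^ ν ∣ eulerTerm n ν :=
  (pow_dvd_pow X (Nat.le_mul_of_pos_right ν hn)).mul_right _

theorem eulerTerm_succ_add_X_pow_mul_eulerTerm (n ν : ℕ) :
    eulerTerm n (ν + 1) + X ^ (3 * n + 2) * eulerTerm (n + 1) ν
      = eulerTail n (ν + 1) - eulerTail n (ν + 2) := by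
  have hfirst : ∏ i ∈ range (ν + 2), (1 - X ^ (n + i) : ℤ⟦X⟧)
      = (1 - X ^ n) * ∏ i ∈ range (ν + 1), (1 - X ^ (n + 1 + i)) := by
    rw [prod_range_succ', mul_comm, add_zero]
    simp only [add_assoc, add_comm 1]
  rw [eulerTerm, eulerTerm, eulerTail, eulerTail, hfirst, prod_range_succ _ (ν + 1)]
  ring

theorem sum_eulerTerm_add_X_pow_mul_sum_eulerTerm (n N : ℕ) :
    ∑ ν ∈ range (N + 1), eulerTerm n ν + X ^ (3 * n + 2) * ∑ ν ∈ range N, eulerTerm (n + 1) ν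
      = 1 - X ^ (2 * n + 1) - eulerTail n (N + 1) := by
  induction N with
  | zero =>
    simp only [eulerTerm, eulerTail, zero_add, range_one, sum_singleton, prod_singleton,
      range_zero, sum_empty, zero_mul, one_mul, mul_zero, pow_zero, add_zero]
    ring
  | succ N ih =>
    rw [sum_range_succ, sum_range_succ (eulerTerm (n + 1))]
    linear_combination ih + eulerTerm_succ_add_X_pow_mul_eulerTerm n N

theorem X_pow_dvd_eulerTail {n : ℕ} (hn : 1 ≤ n) (N : ℕ) : X ^ N ∣ eulerTail n (N + 1) :=
  (pow_dvd_pow X (N.le_succ.trans (Nat.le_mul_of_pos_right _ hn))).mul_right _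

/-- Euler's recurrence: for every `n ≥ 1`, `P_n = 1 - q^{2n+1} - q^{3n+2} P_{n+1}`. -/
theorem eulerP_recurrence (n : ℕ) (hn : 1 ≤ n) :
    eulerP n = 1 - PowerSeries.X ^ (2 * n + 1) - PowerSeries.X ^ (3 * n + 2) * eulerP (n + 1) := by
  refine eq_of_forall_X_pow_dvd_sub fun N => ?_
  have hP := X_pow_dvd_seriesSum_sub (X_pow_dvd_eulerTerm hn) (N + 1)
  have hP' := X_pow_dvd_seriesSum_sub (X_pow_dvd_eulerTerm (Nat.le_add_left 1 n)) N
  rw [← eulerP_eq_seriesSum_eulerTerm] at hP hP'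
  have hdiff : eulerP n - (1 - X ^ (2 * n + 1) - X ^ (3 * n + 2) * eulerP (n + 1))
      = (eulerP n - ∑ ν ∈ range (N + 1), eulerTerm n ν)
        + X ^ (3 * n + 2) * (eulerP (n + 1) - ∑ ν ∈ range N, eulerTerm (n + 1) ν)
        - eulerTail n (N + 1) := by
    linear_combination sum_eulerTerm_add_X_pow_mul_sum_eulerTerm n N
  rw [hdiff]
  exact (((pow_dvd_pow X N.le_succ).trans hP).add (hP'.mul_left _)).sub (X_pow_dvd_eulerTail hn N)
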